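/- arXiv:2001.07097 — 3 statements merged into one kernel-verified Lean document; each statement's English description precedes it below -/
import Mathlib

section
/- Let u : [0,∞) × ℝ^d → ℝ be smooth, nonnegative, with u, ∂_t u, ∂_t² u bounded in x uniformly on compact time intervals. For almost every t ≥ 0 at which t ↦ ‖u(t)‖_{L^∞} is differentiable, there exists a sequence (x_n) in ℝ^d such that u(t, x_n) → ‖u(t)‖_{L^∞} and (∂_t u)(t, x_n) → d/dt ‖u(t)‖_{L^∞} as n → ∞. -/
open MeasureTheory Filter Set Topology

lemma slope_sub_deriv_le {f : ℝ → ℝ} (hf : ContDiff ℝ (⊤ : ℕ∞) f) {C T t h : ℝ}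
    (hC : ∀ s ∈ Icc (0:ℝ) T, |deriv (deriv f) s| ≤ C)
    (ht : t ∈ Icc (0:ℝ) T) (hth : t + h ∈ Icc (0:ℝ) T) (hh : h ≠ 0) :
    |(f (t+h) - f t)/h - deriv f t| ≤ C * |h| := by
  have hd1 : Differentiable ℝ f := hf.differentiable (by simp)
  have hfi : ContDiff ℝ ((⊤:ℕ∞):WithTop ℕ∞) f := hf.of_le (by simp)
  have hd2 : Differentiable ℝ (deriv f) :=
    ((contDiff_infty_iff_deriv.mp hfi).2).differentiable (by simp)
  have hC0 : 0 ≤ C := le_trans (abs_nonneg _) (hC t ht)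
  have lip : ∀ a ∈ Icc (0:ℝ) T, ∀ b ∈ Icc (0:ℝ) T,
      |deriv f b - deriv f a| ≤ C * |b - a| := by
    intro a ha b hb
    have := (convex_Icc (0:ℝ) T).norm_image_sub_le_of_norm_deriv_le
      (fun x _ => hd2 x) (fun x hx => by simpa [Real.norm_eq_abs] using hC x hx) ha hb
    simpa [Real.norm_eq_abs] using this
  rcases hh.lt_or_gt with hneg | hpos
  · obtain ⟨c, hc, hceq⟩ := exists_hasDerivAt_eq_slope f (deriv f)
      (show t + h < t by linarith) hd1.continuous.continuousOn
      (fun x _ => (hd1 x).hasDerivAt)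
    have hceq' : deriv f c = (f (t+h) - f t)/h := by
      rw [hceq]; rw [show t - (t+h) = -h by ring]; rw [div_neg]; ring
    have hcIcc : c ∈ Icc (0:ℝ) T := ⟨le_trans hth.1 hc.1.le, le_trans hc.2.le ht.2⟩
    calc |(f (t+h) - f t)/h - deriv f t| = |deriv f c - deriv f t| := by rw [hceq']
      _ ≤ C * |c - t| := lip t ht c hcIcc
      _ ≤ C * |h| := by
          apply mul_le_mul_of_nonneg_left _ hC0
          rw [abs_of_nonpos (by linarith [hc.2] : c - t ≤ 0), abs_of_neg hneg]
          linarith [hc.1]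
  · obtain ⟨c, hc, hceq⟩ := exists_hasDerivAt_eq_slope f (deriv f)
      (show t < t + h by linarith) hd1.continuous.continuousOn
      (fun x _ => (hd1 x).hasDerivAt)
    have hceq' : deriv f c = (f (t+h) - f t)/h := by
      rw [hceq]; rw [show t + h - t = h by ring]
    have hcIcc : c ∈ Icc (0:ℝ) T := ⟨le_trans ht.1 hc.1.le, le_trans hc.2.le hth.2⟩
    calc |(f (t+h) - f t)/h - deriv f t| = |deriv f c - deriv f t| := by rw [hceq']
      _ ≤ C * |c - t| := lip t ht c hcIcc
      _ ≤ C * |h| := by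
          apply mul_le_mul_of_nonneg_left _ hC0
          rw [abs_of_nonneg (by linarith [hc.1] : 0 ≤ c - t), abs_of_pos hpos]
          linarith [hc.2]

/-- For a smooth nonnegative `u` with `u, ∂ₜu, ∂ₜ²u` bounded in space uniformly on compact
time intervals: at a.e. `t ≥ 0` where `t ↦ ‖u(t)‖_{L^∞}` is differentiable there is a
maximizing sequence `xₙ` with `u(t,xₙ) → ‖u(t)‖_{L^∞}` and
`∂ₜu(t,xₙ) → (d/dt)‖u(t)‖_{L^∞}`. -/
theorem stmt1 {d : ℕ} (u : ℝ → EuclideanSpace ℝ (Fin d) → ℝ)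
    (hsmooth : ContDiff ℝ (⊤ : ℕ∞) (Function.uncurry u))
    (hnonneg : ∀ t x, 0 ≤ u t x)
    (hbound : ∀ T > (0:ℝ), ∃ C : ℝ, ∀ t ∈ Icc (0:ℝ) T, ∀ x,
      |u t x| ≤ C ∧ |deriv (fun s => u s x) t| ≤ C ∧
        |deriv (deriv (fun s => u s x)) t| ≤ C) :
    ∀ᵐ t ∂ volume.restrict (Ici (0:ℝ)),
      DifferentiableAt ℝ (fun s => ⨆ x, |u s x|) t →
      ∃ xseq : ℕ → EuclideanSpace ℝ (Fin d),
        Tendsto (fun n => u t (xseq n)) atTop (𝓝 (⨆ x, |u t x|)) ∧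
        Tendsto (fun n => deriv (fun s => u s (xseq n)) t) atTop
          (𝓝 (deriv (fun s => ⨆ x, |u s x|) t)) := by
  -- a.e. t in Ici 0 satisfies 0 < t
  have h0 : ∀ᵐ t ∂ volume.restrict (Ici (0:ℝ)), 0 < t := by
    have hne : ∀ᵐ t ∂ (volume : Measure ℝ), t ≠ 0 := by
      rw [ae_iff]
      simpa using measure_mono_null (fun x hx => by simpa using hx)
        (Real.volume_singleton (a := 0))
    rw [ae_restrict_iff' measurableSet_Ici]
    filter_upwards [hne] with t ht ht0
    exact lt_of_le_of_ne ht0 (Ne.symm ht)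
  filter_upwards [h0] with t ht hdiff
  set M : ℝ → ℝ := fun s => ⨆ x, |u s x| with hM
  set T : ℝ := t + 1 with hT
  obtain ⟨C, hC⟩ := hbound T (by linarith)
  have htIcc : t ∈ Icc (0:ℝ) T := ⟨ht.le, by linarith⟩
  have hC0 : 0 ≤ C := le_trans (abs_nonneg _) (hC t htIcc 0).1
  -- smoothness in time for each fixed x
  have hfx : ∀ x : EuclideanSpace ℝ (Fin d), ContDiff ℝ (⊤ : ℕ∞) (fun s => u s x) :=
    fun x => hsmooth.comp (contDiff_id.prodMk contDiff_const)
  -- boundedness of the family at each time in [0,T]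
  have hbdd : ∀ s ∈ Icc (0:ℝ) T, BddAbove (Set.range fun x => |u s x|) :=
    fun s hs => ⟨C, by rintro y ⟨x, rfl⟩; exact (hC s hs x).1⟩
  have hle : ∀ s ∈ Icc (0:ℝ) T, ∀ x, u s x ≤ M s :=
    fun s hs x => le_trans (le_abs_self _) (le_ciSup (hbdd s hs) x)
  -- choose the maximizing sequence
  have hx : ∀ n : ℕ, ∃ x, M t - 1/(n+1) < u t x := by
    intro n
    have hpos : (0:ℝ) < 1/(n+1) := by positivity
    obtain ⟨x, hx⟩ := exists_lt_of_lt_ciSup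
      (show M t - 1/(n+1) < ⨆ x, |u t x| from by show _ < M t; linarith)
    exact ⟨x, by rwa [abs_of_nonneg (hnonneg t x)] at hx⟩
  choose xseq hxseq using hx
  refine ⟨xseq, ?_, ?_⟩
  · -- first limit, by squeezing
    have hlow : Tendsto (fun n : ℕ => M t - 1/(n+1)) atTop (𝓝 (M t)) := by
      have := tendsto_const_nhds (x := M t) (f := atTop (α := ℕ)) |>.sub
        tendsto_one_div_add_atTop_nhds_zero_nat
      simpa using this
    exact tendsto_of_tendsto_of_tendsto_of_le_of_le hlow tendsto_const_nhds
      (fun n => (hxseq n).le) (fun n => hle t htIcc (xseq n))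
  · -- second limit
    have hM' : HasDerivAt M (deriv M t) t := hdiff.hasDerivAt
    have hslope := hasDerivAt_iff_tendsto_slope.mp hM'
    rw [Metric.tendsto_atTop]
    intro ε hε
    -- extract δ₀ from the slope convergence
    obtain ⟨δ₀, hδ₀pos, hδ₀⟩ := (Metric.tendsto_nhdsWithin_nhds.mp hslope) (ε/3)
      (by linarith)
    have hSlope : ∀ h : ℝ, h ≠ 0 → |h| < δ₀ →
        |(M (t+h) - M t)/h - deriv M t| < ε/3 := by
      intro h hh hhδ
      have h1 : t + h ∈ ({t}ᶜ : Set ℝ) := by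
        simp only [mem_compl_iff, mem_singleton_iff]
        intro hc; exact hh (by linarith)
      have h2 : dist (t+h) t < δ₀ := by
        rw [Real.dist_eq, add_sub_cancel_left]; exact hhδ
      have := hδ₀ h1 h2
      rw [Real.dist_eq] at this
      simpa [slope, add_sub_cancel_left, div_eq_inv_mul] using this
    -- choose δ'
    set δ' : ℝ := min (δ₀/2) (min (t/2) (min 1 (ε/(3*(C+1))))) with hδ'
    have hδ'pos : 0 < δ' := by
      have : (0:ℝ) < ε/(3*(C+1)) := by positivity
      simp only [hδ', lt_min_iff]
      refine ⟨by linarith, by linarith, by norm_num, this⟩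
    have hδ'1 : δ' < δ₀ := lt_of_le_of_lt (min_le_left _ _) (by linarith)
    have hδ't : δ' ≤ t/2 := le_trans (min_le_right _ _) (min_le_left _ _)
    have hδ'le1 : δ' ≤ 1 :=
      le_trans (min_le_right _ _) (le_trans (min_le_right _ _) (min_le_left _ _))
    have hδ'C : C * δ' ≤ ε/3 := by
      have h1 : δ' ≤ ε/(3*(C+1)) :=
        le_trans (min_le_right _ _) (le_trans (min_le_right _ _) (min_le_right _ _))
      have h2 : C * δ' ≤ (C+1) * (ε/(3*(C+1))) := by
        apply mul_le_mul (by linarith) h1 hδ'pos.le (by linarith)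
      have h3 : (C+1) * (ε/(3*(C+1))) = ε/3 := by field_simp
      linarith [h2, h3.le]
    have hthp : t + δ' ∈ Icc (0:ℝ) T := ⟨by linarith, by linarith⟩
    have hthm : t + (-δ') ∈ Icc (0:ℝ) T := ⟨by linarith, by linarith⟩
    -- Taylor-type slope estimates for (fun s => u s x)
    have hkey : ∀ x : EuclideanSpace ℝ (Fin d), ∀ h : ℝ, h ≠ 0 → t + h ∈ Icc (0:ℝ) T →
        |(u (t+h) x - u t x)/h - deriv (fun s => u s x) t| ≤ C * |h| :=
      fun x h hh hth => slope_sub_deriv_le (hfx x)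
        (fun s hs => (hC s hs x).2.2) htIcc hth hh
    -- choose N
    obtain ⟨N, hN⟩ := exists_nat_one_div_lt (show (0:ℝ) < ε/3 * δ' by positivity)
    refine ⟨N, fun n hn => ?_⟩
    have hen0 : 0 ≤ M t - u t (xseq n) := by linarith [hle t htIcc (xseq n)]
    have hen : M t - u t (xseq n) < ε/3 * δ' := by
      have h1 : (1:ℝ)/(n+1) ≤ 1/(N+1) := by
        apply div_le_div_of_nonneg_left (by norm_num) (by positivity)
        exact_mod_cast by omega
      linarith [hxseq n]
    have henδ : (M t - u t (xseq n)) / δ' < ε/3 := by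
      rw [div_lt_iff₀ hδ'pos]; linarith
    set Dn : ℝ := deriv (fun s => u s (xseq n)) t with hDn
    -- upper bound using h = δ'
    have hup : Dn - deriv M t < ε := by
      have hk := hkey (xseq n) δ' hδ'pos.ne' hthp
      have hsl := hSlope δ' hδ'pos.ne' (by rwa [abs_of_pos hδ'pos])
      have hub : u (t+δ') (xseq n) ≤ M (t+δ') := hle (t+δ') hthp (xseq n)
      have e1 : (u (t+δ') (xseq n) - u t (xseq n))/δ'
          ≤ (M (t+δ') - M t)/δ' + (M t - u t (xseq n))/δ' := by
        rw [← add_div]; gcongr; linarith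
      have e2 : Dn ≤ (u (t+δ') (xseq n) - u t (xseq n))/δ' + C * δ' := by
        have := abs_le.mp hk
        rw [abs_of_pos hδ'pos] at this
        linarith [this.1]
      have e3 : (M (t+δ') - M t)/δ' < deriv M t + ε/3 := by
        have := abs_le.mp hsl.le
        linarith [(abs_lt.mp hsl).2]
      linarith
    -- lower bound using h = -δ'
    have hlo : deriv M t - Dn < ε := by
      have hk := hkey (xseq n) (-δ') (by simpa using hδ'pos.ne') hthm
      have hsl := hSlope (-δ') (by simpa using hδ'pos.ne')
        (by rwa [abs_neg, abs_of_pos hδ'pos])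
      have hub : u (t+(-δ')) (xseq n) ≤ M (t+(-δ')) := hle _ hthm (xseq n)
      have e1 : (M (t+(-δ')) - M t)/(-δ') - (M t - u t (xseq n))/δ'
          ≤ (u (t+(-δ')) (xseq n) - u t (xseq n))/(-δ') := by
        rw [div_neg, div_neg, ← neg_add', ← add_div, neg_le_neg_iff]
        gcongr; linarith
      have e2 : (u (t+(-δ')) (xseq n) - u t (xseq n))/(-δ') - C * δ' ≤ Dn := by
        have := abs_le.mp hk
        rw [abs_neg, abs_of_pos hδ'pos] at this
        linarith [this.2]
      have e3 : deriv M t - ε/3 < (M (t+(-δ')) - M t)/(-δ') := by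
        linarith [(abs_lt.mp hsl).1]
      linarith
    rw [Real.dist_eq, abs_sub_lt_iff]
    exact ⟨hup, hlo⟩
end

section
/- Let g : ℝ^d → ℝ be smooth and bounded with bounded second derivatives. If g attains its supremum at a point x₀ (i.e. g(x₀) = sup_x g(x)), then Λg(x₀) ≥ 0, where Λ = (−Δ)^{1/2}. Moreover Λg(x₀) = 0 if and only if g is constant. -/
open MeasureTheory Real Filter

noncomputable section

/-- The fractional Laplacian `Λ = (-Δ)^{1/2}` interpreted via its singular integral
representation (up to the positive constant `C_d`, which does not affect sign). -/
def LamSing {d : ℕ} (g : EuclideanSpace ℝ (Fin d) → ℝ)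
    (x : EuclideanSpace ℝ (Fin d)) : ℝ :=
  ∫ y, (2 * g x - g (x + y) - g (x - y)) / ‖y‖ ^ (d + 1)

open Metric Set

lemma symmDiffBound {E : Type*} [NormedAddCommGroup E] [NormedSpace ℝ E]
    (g : E → ℝ) (hg : ContDiff ℝ (⊤ : ℕ∞) g)
    {C : ℝ} (hC : ∀ x, ‖iteratedFDeriv ℝ 2 g x‖ ≤ C) (x y : E) :
    |2 * g x - g (x + y) - g (x - y)| ≤ 2 * C * ‖y‖ ^ 2 := by
  have hC0 : 0 ≤ C := (norm_nonneg _).trans (hC x)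
  have hder : Differentiable ℝ (fderiv ℝ g) :=
    (hg.fderiv_right (m := (⊤ : ℕ∞)) (by simp)).differentiable (by simp)
  have hdg : Differentiable ℝ g := hg.differentiable (by simp)
  have hbound : ∀ z, ‖fderiv ℝ (fderiv ℝ g) z‖ ≤ C := by
    intro z
    have h1 : ‖iteratedFDeriv ℝ 0 (fderiv ℝ (fderiv ℝ g)) z‖
        = ‖iteratedFDeriv ℝ 1 (fderiv ℝ g) z‖ := norm_iteratedFDeriv_fderiv
    have h2 : ‖iteratedFDeriv ℝ 1 (fderiv ℝ g) z‖ = ‖iteratedFDeriv ℝ 2 g z‖ :=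
      norm_iteratedFDeriv_fderiv
    rw [norm_iteratedFDeriv_zero] at h1
    rw [h1, h2]; exact hC z
  have hlip : ∀ a b : E, ‖fderiv ℝ g a - fderiv ℝ g b‖ ≤ C * ‖a - b‖ := by
    intro a b
    exact Convex.norm_image_sub_le_of_norm_fderiv_le
      (fun z _ => (hder z)) (fun z _ => hbound z) convex_univ (mem_univ b) (mem_univ a)
  set φ : ℝ → ℝ := fun t => g (x + t • y) + g (x - t • y) with hφdef
  set φ' : ℝ → ℝ := fun t => (fderiv ℝ g (x + t • y) - fderiv ℝ g (x - t • y)) y with hφ'def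
  have hφ : ∀ t ∈ Set.Icc (0:ℝ) 1, HasDerivWithinAt φ (φ' t) (Set.Icc 0 1) t := by
    intro t _
    have ha : HasDerivAt (fun t : ℝ => x + t • y) y t := by
      simpa using ((hasDerivAt_id t).smul_const y).const_add x
    have hb : HasDerivAt (fun t : ℝ => x - t • y) (-y) t := by
      simpa using ((hasDerivAt_id t).smul_const y).const_sub x
    have h1 : HasDerivAt (fun t : ℝ => g (x + t • y)) (fderiv ℝ g (x + t • y) y) t :=
      (hdg (x + t • y)).hasFDerivAt.comp_hasDerivAt t ha
    have h2 : HasDerivAt (fun t : ℝ => g (x - t • y)) (fderiv ℝ g (x - t • y) (-y)) t :=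
      (hdg (x - t • y)).hasFDerivAt.comp_hasDerivAt t hb
    have := h1.add h2
    have heq : fderiv ℝ g (x + t • y) y + fderiv ℝ g (x - t • y) (-y) = φ' t := by
      simp only [hφ'def, ContinuousLinearMap.sub_apply, map_neg]
      ring
    rw [heq] at this
    exact this.hasDerivWithinAt
  have hbd : ∀ t ∈ Set.Ico (0:ℝ) 1, ‖φ' t‖ ≤ 2 * C * ‖y‖ ^ 2 := by
    intro t ht
    have h1 : ‖φ' t‖ ≤ ‖fderiv ℝ g (x + t • y) - fderiv ℝ g (x - t • y)‖ * ‖y‖ :=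
      ContinuousLinearMap.le_opNorm _ y
    have h2 : ‖fderiv ℝ g (x + t • y) - fderiv ℝ g (x - t • y)‖
        ≤ C * ‖(x + t • y) - (x - t • y)‖ := hlip _ _
    have h3 : (x + t • y) - (x - t • y) = (2 * t) • y := by
      rw [two_mul, add_smul]; abel
    have h4 : ‖(x + t • y) - (x - t • y)‖ ≤ 2 * ‖y‖ := by
      rw [h3, norm_smul]
      have h5 : |2 * t| ≤ 2 := by rw [abs_of_nonneg (by linarith [ht.1])]; linarith [ht.2]
      apply mul_le_mul_of_nonneg_right _ (norm_nonneg y)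
      rw [Real.norm_eq_abs]; exact h5
    calc ‖φ' t‖ ≤ C * ‖(x + t • y) - (x - t • y)‖ * ‖y‖ :=
          h1.trans (mul_le_mul_of_nonneg_right h2 (norm_nonneg y))
      _ ≤ C * (2 * ‖y‖) * ‖y‖ := by
          apply mul_le_mul_of_nonneg_right _ (norm_nonneg y)
          exact mul_le_mul_of_nonneg_left h4 hC0
      _ = 2 * C * ‖y‖ ^ 2 := by ring
  have key := norm_image_sub_le_of_norm_deriv_le_segment' hφ hbd 1 (by norm_num)
  have hφ1 : φ 1 = g (x + y) + g (x - y) := by simp [hφdef]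
  have hφ0 : φ 0 = 2 * g x := by simp [hφdef]; ring
  rw [hφ1, hφ0] at key
  simp only [Real.norm_eq_abs] at key
  calc |2 * g x - g (x + y) - g (x - y)|
      = |g (x + y) + g (x - y) - 2 * g x| := by rw [abs_sub_comm]; ring_nf
    _ ≤ 2 * C * ‖y‖ ^ 2 * (1 - 0) := key
    _ = 2 * C * ‖y‖ ^ 2 := by ring

lemma integrableOn_inv_pow_ball {d k : ℕ} (hk : k < d) :
    IntegrableOn (fun y : EuclideanSpace ℝ (Fin d) => (‖y‖ ^ k)⁻¹)
      (Metric.ball (0 : EuclideanSpace ℝ (Fin d)) 1) volume := by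
  set E := EuclideanSpace ℝ (Fin d)
  have hdim : Module.finrank ℝ E = d := finrank_euclideanSpace_fin
  set f : E → ℝ := fun y => (‖y‖ ^ k)⁻¹ with hfdef
  have hfm : AEStronglyMeasurable f volume :=
    ((measurable_norm.pow_const k).inv).aestronglyMeasurable
  set s : ℕ → Set E := fun n => closedBall 0 ((1/2 : ℝ)^n) \ ball 0 ((1/2 : ℝ)^(n+1)) with hsdef
  have hmeas : ∀ n, MeasurableSet (s n) := fun n =>
    measurableSet_closedBall.diff measurableSet_ball
  have hfin : ∀ n, volume (s n) ≠ ⊤ := fun n =>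
    ((measure_mono diff_subset).trans_lt measure_closedBall_lt_top).ne
  set B : ℝ := (volume (Metric.ball (0:E) 1)).toReal with hBdef
  have hB0 : 0 ≤ B := ENNReal.toReal_nonneg
  have hvol : ∀ n, (volume (s n)).toReal ≤ ((1/2 : ℝ)^n)^d * B := by
    intro n
    have h1 : volume (s n) ≤ volume (closedBall (0:E) ((1/2:ℝ)^n)) :=
      measure_mono diff_subset
    have h2 : volume (closedBall (0:E) ((1/2:ℝ)^n))
        = ENNReal.ofReal (((1/2:ℝ)^n) ^ d) * volume (Metric.ball (0:E) 1) := by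
      rw [Measure.addHaar_closedBall _ _ (by positivity), hdim]
    calc (volume (s n)).toReal ≤ (volume (closedBall (0:E) ((1/2:ℝ)^n))).toReal :=
          ENNReal.toReal_mono measure_closedBall_lt_top.ne h1
      _ = ((1/2:ℝ)^n)^d * B := by
          rw [h2, ENNReal.toReal_mul, ENNReal.toReal_ofReal (by positivity)]
  have hbnd : ∀ n, ∀ y ∈ s n, ‖f y‖ ≤ (2:ℝ) ^ ((n+1)*k) := by
    intro n y hy
    have hy1 : ((1/2:ℝ))^(n+1) ≤ ‖y‖ := by
      have := hy.2
      rw [mem_ball, dist_zero_right, not_lt] at this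
      exact this
    have hpos : (0:ℝ) < ((1/2:ℝ))^(n+1) := by positivity
    have hle : (‖y‖ ^ k)⁻¹ ≤ (((1/2:ℝ)^(n+1)) ^ k)⁻¹ := by
      apply inv_anti₀ (by positivity)
      exact pow_le_pow_left₀ hpos.le hy1 k
    rw [hfdef]
    simp only [norm_inv, norm_pow, norm_norm, Real.norm_eq_abs, abs_inv, abs_pow, abs_norm]
    refine hle.trans (le_of_eq ?_)
    rw [one_div, inv_pow, inv_pow, inv_inv, ← pow_mul]
  have hint : ∀ n, IntegrableOn f (s n) volume := fun n =>
    Measure.integrableOn_of_bounded (hfin n) hfm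
      ((ae_restrict_iff' (hmeas n)).2 (ae_of_all _ (hbnd n)))
  have harith : ∀ n : ℕ, (2:ℝ) ^ ((n+1)*k) * (((1/2:ℝ)^n)^d * B)
      = (2:ℝ)^k * B * ((1/2:ℝ)^(d-k))^n := by
    intro n
    obtain ⟨m, rfl⟩ : ∃ m, d = k + m := ⟨d - k, by omega⟩
    have hm : k + m - k = m := by omega
    rw [hm]
    have h2 : (2:ℝ) ≠ 0 := two_ne_zero
    field_simp
    rw [← pow_mul, ← pow_mul, show (n+1)*k = k + n*k by ring, show n*(k+m) = n*k + m*n by ring, pow_add, pow_add]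
    have h3 : (2:ℝ)^(n*k) * (1/2)^(n*k) = 1 := by rw [← mul_pow]; norm_num
    linear_combination (2^k * B * (1/2:ℝ)^(m*n)) * h3
  have hterm : ∀ n, ∫ y in s n, ‖f y‖ ≤ (2:ℝ)^k * B * ((1/2:ℝ)^(d-k))^n := by
    intro n
    calc ∫ y in s n, ‖f y‖ ≤ ∫ _ in s n, (2:ℝ) ^ ((n+1)*k) := by
          apply setIntegral_mono_on (hint n).norm _ (hmeas n) (hbnd n)
          exact integrableOn_const (hfin n)
      _ = (volume (s n)).toReal • (2:ℝ) ^ ((n+1)*k) := setIntegral_const _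
      _ ≤ ((1/2:ℝ)^n)^d * B * (2:ℝ) ^ ((n+1)*k) := by
          rw [smul_eq_mul]
          exact mul_le_mul_of_nonneg_right (hvol n) (by positivity)
      _ = (2:ℝ)^k * B * ((1/2:ℝ)^(d-k))^n := by rw [mul_comm]; exact harith n
  have hsum : Summable fun n => ∫ y in s n, ‖f y‖ := by
    apply Summable.of_nonneg_of_le
      (fun n => integral_nonneg fun y => norm_nonneg _) hterm
    apply Summable.mul_left
    apply summable_geometric_of_lt_one (by positivity)
    apply pow_lt_one₀ (by norm_num) (by norm_num)
    omega
  have hUnion : IntegrableOn f (⋃ n, s n) volume :=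
    integrableOn_iUnion_of_summable_integral_norm hint hsum
  have hzero : IntegrableOn f ({(0:E)} : Set E) volume := by
    have h0 : volume ({(0:E)} : Set E) = 0 := by
      have hsub : ({(0:E)} : Set E) ⊆ closedBall 0 0 := by
        intro z hz; simp_all
      refine le_antisymm (le_trans (measure_mono hsub) ?_) zero_le
      rw [Measure.addHaar_closedBall _ _ le_rfl, hdim]
      simp [zero_pow (by omega : d ≠ 0)]
    unfold IntegrableOn
    rw [Measure.restrict_eq_zero.2 h0]
    exact integrable_zero_measure
  refine (hUnion.union hzero).mono_set ?_
  intro y hy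
  rcases eq_or_ne y 0 with rfl | hy0
  · exact Or.inr rfl
  · left
    have hylt : ‖y‖ < 1 := by rwa [mem_ball, dist_zero_right] at hy
    have hypos : 0 < ‖y‖ := norm_pos_iff.2 hy0
    have hex : ∃ n : ℕ, (1/2:ℝ)^n < ‖y‖ :=
      exists_pow_lt_of_lt_one hypos (by norm_num)
    classical
    set m := Nat.find hex with hmdef
    have hm : (1/2:ℝ)^m < ‖y‖ := Nat.find_spec hex
    have hm0 : m ≠ 0 := by
      intro h
      rw [h] at hm
      simp at hm
      linarith
    refine mem_iUnion.2 ⟨m - 1, ?_, ?_⟩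
    · rw [mem_closedBall, dist_zero_right]
      have := Nat.find_min hex (m := m - 1) (by omega)
      linarith [not_lt.1 this]
    · rw [mem_ball, dist_zero_right, not_lt]
      have : m - 1 + 1 = m := by omega
      rw [this]
      exact hm.le

/-- If a smooth bounded `g` with bounded second derivatives attains its supremum at `x₀`,
then `Λg(x₀) ≥ 0`, and `Λg(x₀) = 0` iff `g` is constant. -/
theorem stmt3 {d : ℕ} (hd : 0 < d) (g : EuclideanSpace ℝ (Fin d) → ℝ)
    (hg : ContDiff ℝ (⊤ : ℕ∞) g)
    (hb : ∃ C, ∀ x, |g x| ≤ C)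
    (hb2 : ∃ C, ∀ x, ‖iteratedFDeriv ℝ 2 g x‖ ≤ C)
    (x₀ : EuclideanSpace ℝ (Fin d)) (hmax : g x₀ = ⨆ x, g x) :
    0 ≤ LamSing g x₀ ∧ (LamSing g x₀ = 0 ↔ ∃ c, ∀ x, g x = c) := by
  have hE : Nontrivial (EuclideanSpace ℝ (Fin d)) := by
    have : Nontrivial (Fin d) → True := fun _ => trivial
    exact ⟨0, EuclideanSpace.single ⟨0, hd⟩ 1, by
      intro h
      have := congrArg (fun v : EuclideanSpace ℝ (Fin d) => v ⟨0, hd⟩) h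
      simp [EuclideanSpace.single] at this⟩
  obtain ⟨C₀, hC₀⟩ := hb
  obtain ⟨C₂, hC₂⟩ := hb2
  have hC₀0 : 0 ≤ C₀ := (abs_nonneg _).trans (hC₀ x₀)
  have hC₂0 : 0 ≤ C₂ := (norm_nonneg _).trans (hC₂ x₀)
  have hdim : Module.finrank ℝ (EuclideanSpace ℝ (Fin d)) = d := finrank_euclideanSpace_fin
  have hgc : Continuous g := hg.continuous
  -- g x₀ is the max
  have hbdd : BddAbove (Set.range g) := by
    refine ⟨C₀, ?_⟩
    rintro _ ⟨x, rfl⟩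
    exact (abs_le.1 (hC₀ x)).2
  have hle : ∀ x, g x ≤ g x₀ := fun x => hmax ▸ le_ciSup hbdd x
  -- the integrand
  set N : EuclideanSpace ℝ (Fin d) → ℝ := fun y => 2 * g x₀ - g (x₀ + y) - g (x₀ - y) with hNdef
  set f : EuclideanSpace ℝ (Fin d) → ℝ := fun y => N y / ‖y‖ ^ (d + 1) with hfdef
  have hLam : LamSing g x₀ = ∫ y, f y := rfl
  have hNnn : ∀ y, 0 ≤ N y := fun y => by
    have h1 := hle (x₀ + y); have h2 := hle (x₀ - y); simp only [hNdef]; linarith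
  have hfnn : ∀ y, 0 ≤ f y := fun y => div_nonneg (hNnn y) (by positivity)
  have hNc : Continuous N := by
    apply Continuous.sub
    apply Continuous.sub continuous_const
    · exact hgc.comp (continuous_const.add continuous_id)
    · exact hgc.comp (continuous_const.sub continuous_id)
  have hfm : Measurable f := hNc.measurable.div ((continuous_norm.pow (d+1)).measurable)
  -- integrability near zero
  have hnear : IntegrableOn f (Metric.ball (0 : EuclideanSpace ℝ (Fin d)) 1) volume := by
    have hdom := (integrableOn_inv_pow_ball (d := d) (k := d - 1) (by omega)).const_mul (2 * C₂)
    apply Integrable.mono' hdom hfm.aestronglyMeasurable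
    apply ae_of_all
    intro y
    rcases eq_or_ne y 0 with rfl | hy0
    · have : N (0 : EuclideanSpace ℝ (Fin d)) = 0 := by simp [hNdef]; ring
      rw [Real.norm_eq_abs, hfdef]
      simp only [this, zero_div, abs_zero]
      positivity
    · have hypos : (0:ℝ) < ‖y‖ := norm_pos_iff.2 hy0
      have hNb : |N y| ≤ 2 * C₂ * ‖y‖ ^ 2 := symmDiffBound g hg hC₂ x₀ y
      have hsplit : ‖y‖ ^ (d + 1) = ‖y‖ ^ 2 * ‖y‖ ^ (d - 1) := by
        rw [← pow_add]; congr 1; omega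
      rw [Real.norm_eq_abs, hfdef]
      simp only [abs_div, abs_pow, abs_norm]
      rw [div_le_iff₀ (by positivity)]
      calc |N y| ≤ 2 * C₂ * ‖y‖ ^ 2 := hNb
        _ = 2 * C₂ * (‖y‖ ^ (d-1))⁻¹ * ‖y‖ ^ (d+1) := by
            rw [hsplit]; field_simp
  -- integrability away from zero
  have hfar : IntegrableOn f (Metric.ball (0 : EuclideanSpace ℝ (Fin d)) 1)ᶜ volume := by
    have hint1 : Integrable (fun y : EuclideanSpace ℝ (Fin d) => (4 * C₀ * 2^(d+1)) * ((1 + ‖y‖)^(d+1))⁻¹) volume := by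
      have h := integrable_one_add_norm (E := EuclideanSpace ℝ (Fin d)) (μ := volume) (r := (d+1 : ℝ)) (by rw [hdim]; norm_num)
      have heq : (fun y : EuclideanSpace ℝ (Fin d) => (1 + ‖y‖) ^ (-(d+1 : ℝ))) =
          fun y : EuclideanSpace ℝ (Fin d) => ((1 + ‖y‖)^(d+1))⁻¹ := by
        funext y
        rw [Real.rpow_neg (by positivity)]
        norm_num
        rw [← Real.rpow_natCast (1 + ‖y‖) (d+1)]
        push_cast
        ring_nf
      rw [heq] at h
      exact h.const_mul _
    apply Integrable.mono' hint1.restrict hfm.aestronglyMeasurable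
    rw [ae_restrict_iff' measurableSet_ball.compl]
    apply ae_of_all
    intro y hy
    have hy1 : (1:ℝ) ≤ ‖y‖ := by
      rw [Set.mem_compl_iff, mem_ball, dist_zero_right, not_lt] at hy
      exact hy
    have hypos : (0:ℝ) < ‖y‖ := lt_of_lt_of_le one_pos hy1
    have hNb : |N y| ≤ 4 * C₀ := by
      have h1 := abs_le.1 (hC₀ x₀)
      have h2 := abs_le.1 (hC₀ (x₀ + y))
      have h3 := abs_le.1 (hC₀ (x₀ - y))
      rw [abs_le, hNdef]; constructor <;> simp only <;> linarith
    have hpow : (1 + ‖y‖)^(d+1) ≤ 2^(d+1) * ‖y‖^(d+1) := by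
      rw [← mul_pow]
      apply pow_le_pow_left₀ (by positivity)
      linarith
    rw [Real.norm_eq_abs, hfdef]
    simp only [abs_div, abs_pow, abs_norm]
    rw [div_le_iff₀ (by positivity)]
    calc |N y| ≤ 4 * C₀ := hNb
      _ = (4 * C₀ * 2^(d+1)) * ((2:ℝ)^(d+1) * ‖y‖^(d+1))⁻¹ * ‖y‖ ^ (d+1) := by
          field_simp
      _ ≤ (4 * C₀ * 2^(d+1)) * ((1 + ‖y‖)^(d+1))⁻¹ * ‖y‖ ^ (d+1) := by
          apply mul_le_mul_of_nonneg_right _ (by positivity)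
          apply mul_le_mul_of_nonneg_left _ (by positivity)
          exact inv_anti₀ (by positivity) hpow
  have hint : Integrable f volume := by
    rw [← integrableOn_univ, ← Set.union_compl_self (Metric.ball (0 : EuclideanSpace ℝ (Fin d)) 1)]
    exact hnear.union hfar
  have hnonneg : 0 ≤ LamSing g x₀ := by
    rw [hLam]; exact integral_nonneg hfnn
  refine ⟨hnonneg, ?_, ?_⟩
  · -- LamSing = 0 → constant
    intro h0
    rw [hLam, integral_eq_zero_iff_of_nonneg hfnn hint] at h0
    have hzero : volume ({(0 : EuclideanSpace ℝ (Fin d))} : Set (EuclideanSpace ℝ (Fin d))) = 0 := by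
      have hsub : ({(0 : EuclideanSpace ℝ (Fin d))} : Set (EuclideanSpace ℝ (Fin d))) ⊆ closedBall 0 0 := by intro z hz; simp_all
      refine le_antisymm (le_trans (measure_mono hsub) ?_) zero_le
      rw [Measure.addHaar_closedBall _ _ le_rfl, hdim]
      simp [zero_pow (by omega : d ≠ 0)]
    have hne : ∀ᵐ y : EuclideanSpace ℝ (Fin d), y ≠ 0 := by
      rw [ae_iff]
      convert hzero using 2
      simp
    have heq : (fun y : EuclideanSpace ℝ (Fin d) => g (x₀ + y)) =ᵐ[volume] fun _ => g x₀ := by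
      filter_upwards [h0, hne] with y hy hy0
      have hypos : (0:ℝ) < ‖y‖ := norm_pos_iff.2 hy0
      have hden : ‖y‖ ^ (d+1) ≠ 0 := by positivity
      have hNy : N y = 0 := by
        rcases div_eq_zero_iff.1 hy with h | h
        · exact h
        · exact absurd h hden
      have h1 := hle (x₀ + y); have h2 := hle (x₀ - y)
      simp only [hNdef] at hNy
      linarith
    have heq2 : (fun y : EuclideanSpace ℝ (Fin d) => g (x₀ + y)) = fun _ => g x₀ :=
      (Continuous.ae_eq_iff_eq volume (hgc.comp (continuous_const.add continuous_id))
        continuous_const).1 heq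
    refine ⟨g x₀, fun x => ?_⟩
    have := congrFun heq2 (x - x₀)
    simpa using this
  · -- constant → LamSing = 0
    rintro ⟨c, hc⟩
    have : ∀ y : EuclideanSpace ℝ (Fin d), f y = 0 := by
      intro y
      rw [hfdef]
      simp only [hNdef, hc]
      ring_nf
    rw [hLam]
    simp only [this, integral_zero]
end
end

section
/- For the fractional Laplacian Λ = (−Δ)^{1/2} on ℝ^d and u smooth, bounded, with bounded second derivatives, Kato's inequality holds: sgn(u(x))·Λu(x) ≥ Λ|u|(x) pointwise at every x where u(x) ≠ 0, interpreting both sides via the singular integral representation. -/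
open MeasureTheory Real Filter

noncomputable section

section Aux

open Set Metric

lemma finite_ball_rpow {d : ℕ} (hd : 0 < d) {ε : ℝ} (hε : 0 < ε) :
    ∫⁻ y in Metric.ball (0 : EuclideanSpace ℝ (Fin d)) ε,
      ENNReal.ofReal (‖y‖ ^ ((1:ℝ) - d)) < ⊤ := by
  set E := EuclideanSpace ℝ (Fin d)
  haveI : Nontrivial E := by
    have : 0 < Module.finrank ℝ E := by simp [E, hd]
    exact Module.nontrivial_of_finrank_pos this
  set S : ℕ → Set E := fun n => Metric.ball 0 (ε * 2⁻¹ ^ n) \ Metric.ball 0 (ε * 2⁻¹ ^ (n+1))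
    with hS
  have hcover : Metric.ball (0:E) ε ⊆ {0} ∪ ⋃ n, S n := by
    intro y hy
    rcases eq_or_ne y 0 with h0 | h0
    · exact Or.inl h0
    right
    have hy0 : 0 < ‖y‖ := norm_pos_iff.2 h0
    have hex : ∃ n : ℕ, ε * 2⁻¹ ^ (n+1) ≤ ‖y‖ := by
      obtain ⟨n, hn⟩ := exists_pow_lt_of_lt_one (div_pos hy0 hε) (by norm_num : (2:ℝ)⁻¹ < 1)
      refine ⟨n, ?_⟩
      have h1 : (2:ℝ)⁻¹ ^ (n+1) ≤ 2⁻¹ ^ n := by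
        apply pow_le_pow_of_le_one (by norm_num) (by norm_num); omega
      have := (lt_div_iff₀ hε).1 hn
      nlinarith
    set n := Nat.find hex with hn
    have h1 : ε * 2⁻¹ ^ (n+1) ≤ ‖y‖ := Nat.find_spec hex
    refine mem_iUnion.2 ⟨n, ?_, ?_⟩
    · rw [mem_ball_zero_iff]
      rcases Nat.eq_zero_or_pos n with h | h
      · rw [h]; simpa using hy.out
      · have := Nat.find_min hex (m := n - 1) (by omega)
        push_neg at this
        have : ‖y‖ < ε * 2⁻¹ ^ (n - 1 + 1) := this
        convert this using 3
        omega
    · rw [mem_ball_zero_iff]; exact not_lt.2 h1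
  have hle := lintegral_mono_set (μ := volume)
    (f := fun y : E => ENNReal.ofReal (‖y‖ ^ ((1:ℝ) - d))) hcover
  refine lt_of_le_of_lt (hle.trans (lintegral_union_le _ _ _)) ?_
  have hzero : ∫⁻ y in ({0} : Set E), ENNReal.ofReal (‖y‖ ^ ((1:ℝ) - d)) ∂volume = 0 :=
    setLIntegral_measure_zero _ _ (measure_singleton 0)
  rw [hzero, zero_add]
  refine lt_of_le_of_lt (lintegral_iUnion_le _ _) ?_
  set K : ℝ := (2:ℝ)⁻¹ ^ ((1:ℝ) - d) * ε with hK
  have hKpos : 0 < K := mul_pos (Real.rpow_pos_of_pos (by norm_num) _) hε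
  have hterm : ∀ n : ℕ, (∫⁻ y in S n, ENNReal.ofReal (‖y‖ ^ ((1:ℝ) - d)) ∂volume)
      ≤ ENNReal.ofReal (K * 2⁻¹ ^ n) * volume (Metric.ball (0:E) 1) := by
    intro n
    have hrn : (0:ℝ) < ε * 2⁻¹ ^ (n+1) := by positivity
    have hSn : MeasurableSet (S n) := measurableSet_ball.diff measurableSet_ball
    have hpt : ∀ y ∈ S n, ENNReal.ofReal (‖y‖ ^ ((1:ℝ) - d))
        ≤ ENNReal.ofReal ((ε * 2⁻¹ ^ (n+1)) ^ ((1:ℝ) - d)) := by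
      intro y hy
      apply ENNReal.ofReal_le_ofReal
      have h2 : ε * 2⁻¹ ^ (n+1) ≤ ‖y‖ := by
        have := hy.2; rw [mem_ball_zero_iff] at this; linarith [not_lt.1 this]
      exact Real.rpow_le_rpow_of_nonpos hrn h2 (by
        have : (1:ℝ) ≤ d := by exact_mod_cast hd
        linarith)
    calc ∫⁻ y in S n, ENNReal.ofReal (‖y‖ ^ ((1:ℝ) - d)) ∂volume
        ≤ ∫⁻ _ in S n, ENNReal.ofReal ((ε * 2⁻¹ ^ (n+1)) ^ ((1:ℝ) - d)) ∂volume :=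
          setLIntegral_mono' hSn hpt
      _ = ENNReal.ofReal ((ε * 2⁻¹ ^ (n+1)) ^ ((1:ℝ) - d)) * volume (S n) :=
          setLIntegral_const _ _
      _ ≤ ENNReal.ofReal ((ε * 2⁻¹ ^ (n+1)) ^ ((1:ℝ) - d)) *
            volume (Metric.ball (0:E) (ε * 2⁻¹ ^ n)) := by
          gcongr
          exact diff_subset
      _ = ENNReal.ofReal (K * 2⁻¹ ^ n) * volume (Metric.ball (0:E) 1) := by
          rw [Measure.addHaar_ball volume (0:E) (by positivity : (0:ℝ) ≤ ε * 2⁻¹ ^ n)]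
          rw [← mul_assoc, ← ENNReal.ofReal_mul (by positivity)]
          congr 2
          have hfr : Module.finrank ℝ E = d := by simp [E]
          rw [hfr]
          have ht : (0:ℝ) < ε * 2⁻¹ ^ n := by positivity
          have : ((ε * 2⁻¹ ^ n : ℝ)) ^ d = (ε * 2⁻¹ ^ n) ^ ((d:ℝ)) := by
            rw [Real.rpow_natCast]
          rw [this]
          have expand : ε * 2⁻¹ ^ (n+1) = 2⁻¹ * (ε * 2⁻¹ ^ n) := by ring
          rw [expand, Real.mul_rpow (by norm_num) ht.le, mul_assoc,
            ← Real.rpow_add ht, sub_add_cancel, Real.rpow_one, hK]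
          ring
  refine lt_of_le_of_lt (ENNReal.tsum_le_tsum hterm) ?_
  rw [ENNReal.tsum_mul_right]
  have hsum : Summable (fun n : ℕ => K * 2⁻¹ ^ n) :=
    (summable_geometric_of_lt_one (by norm_num) (by norm_num)).mul_left K
  have : ∑' n : ℕ, ENNReal.ofReal (K * 2⁻¹ ^ n)
      = ENNReal.ofReal (∑' n : ℕ, K * 2⁻¹ ^ n) :=
    (ENNReal.ofReal_tsum_of_nonneg (fun n => by positivity) hsum).symm
  rw [this]
  exact ENNReal.mul_lt_top ENNReal.ofReal_lt_top measure_ball_lt_top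

lemma integrable_kernel {d : ℕ} (hd : 0 < d) (f : EuclideanSpace ℝ (Fin d) → ℝ)
    (hf : Measurable f) {K M ε : ℝ} (hε : 0 < ε) (hK : 0 ≤ K)
    (h1 : ∀ y, ‖y‖ < ε → |f y| ≤ K * ‖y‖ ^ 2) (h2 : ∀ y, |f y| ≤ M) :
    Integrable (fun y => f y / ‖y‖ ^ (d + 1)) := by
  have hM : 0 ≤ M := le_trans (abs_nonneg _) (h2 0)
  constructor
  · exact (hf.div ((measurable_norm.pow_const (d+1)))).aestronglyMeasurable
  rw [hasFiniteIntegral_iff_norm]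
  rw [← lintegral_add_compl (μ := volume)
    (f := fun y : EuclideanSpace ℝ (Fin d) => ENNReal.ofReal ‖f y / ‖y‖ ^ (d+1)‖)
    (measurableSet_ball (x := (0:EuclideanSpace ℝ (Fin d))) (ε := ε))]
  apply ENNReal.add_lt_top.2
  constructor
  · -- ball piece
    have hpt : ∀ y ∈ Metric.ball (0:EuclideanSpace ℝ (Fin d)) ε,
        ENNReal.ofReal ‖f y / ‖y‖ ^ (d+1)‖
        ≤ ENNReal.ofReal (K * ‖y‖ ^ ((1:ℝ) - d)) := by
      intro y hy
      apply ENNReal.ofReal_le_ofReal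
      rw [mem_ball_zero_iff] at hy
      rcases eq_or_ne y 0 with h0 | h0
      · subst h0
        simp only [norm_zero, zero_pow (Nat.succ_ne_zero d), div_zero, norm_zero]
        positivity
      · have hn : (0:ℝ) < ‖y‖ := norm_pos_iff.2 h0
        have hden : (0:ℝ) < ‖y‖ ^ (d+1) := by positivity
        rw [Real.norm_eq_abs, abs_div, abs_of_pos hden]
        have step1 : |f y| / ‖y‖ ^ (d+1) ≤ (K * ‖y‖ ^ 2) / ‖y‖ ^ (d+1) := by
          gcongr; exact h1 y hy
        refine step1.trans (le_of_eq ?_)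
        rw [mul_div_assoc]
        congr 1
        rw [← Real.rpow_natCast ‖y‖ 2, ← Real.rpow_natCast ‖y‖ (d+1),
          ← Real.rpow_sub hn]
        congr 1
        push_cast; ring
    refine lt_of_le_of_lt (setLIntegral_mono' measurableSet_ball hpt) ?_
    have : ∀ y : EuclideanSpace ℝ (Fin d), ENNReal.ofReal (K * ‖y‖ ^ ((1:ℝ) - d))
        = ENNReal.ofReal K * ENNReal.ofReal (‖y‖ ^ ((1:ℝ) - d)) := fun y =>
      ENNReal.ofReal_mul hK
    simp_rw [this]
    rw [lintegral_const_mul' _ _ ENNReal.ofReal_ne_top]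
    exact ENNReal.mul_lt_top ENNReal.ofReal_lt_top (finite_ball_rpow hd hε)
  · -- tail piece
    set C : ℝ := M * (1 + 1/ε) ^ (d+1) with hC
    have hCpos : 0 ≤ C := by positivity
    have hpt : ∀ y ∈ (Metric.ball (0:EuclideanSpace ℝ (Fin d)) ε)ᶜ,
        ENNReal.ofReal ‖f y / ‖y‖ ^ (d+1)‖
        ≤ ENNReal.ofReal (C * (1 + ‖y‖) ^ (-((d:ℝ)+1))) := by
      intro y hy
      apply ENNReal.ofReal_le_ofReal
      have hyε : ε ≤ ‖y‖ := by
        simp only [Set.mem_compl_iff, mem_ball_zero_iff, not_lt] at hy; exact hy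
      have hn : (0:ℝ) < ‖y‖ := lt_of_lt_of_le hε hyε
      have hden : (0:ℝ) < ‖y‖ ^ (d+1) := by positivity
      have h1y : (0:ℝ) < 1 + ‖y‖ := by positivity
      have hpow1 : (0:ℝ) < (1 + ‖y‖) ^ (d+1) := by positivity
      rw [Real.norm_eq_abs, abs_div, abs_of_pos hden]
      have key : (1 + ‖y‖) ^ (d+1) ≤ (1 + 1/ε) ^ (d+1) * ‖y‖ ^ (d+1) := by
        rw [← mul_pow]
        apply pow_le_pow_left₀ h1y.le
        have h' : 1 ≤ ‖y‖ / ε := (one_le_div hε).2 hyε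
        calc 1 + ‖y‖ ≤ ‖y‖/ε + ‖y‖ := by linarith
          _ = (1 + 1/ε) * ‖y‖ := by field_simp; ring
      have hrw : (1 + ‖y‖) ^ (-((d:ℝ)+1)) = ((1 + ‖y‖) ^ (d+1))⁻¹ := by
        rw [← Real.rpow_natCast (1+‖y‖) (d+1), ← Real.rpow_neg h1y.le]
        congr 1; push_cast; ring
      rw [hrw, hC]
      have h3 : |f y| * (1 + ‖y‖)^(d+1) ≤ (M * (1+1/ε)^(d+1)) * ‖y‖^(d+1) := by
        calc |f y| * (1+‖y‖)^(d+1) ≤ M * ((1+1/ε)^(d+1) * ‖y‖^(d+1)) :=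
              mul_le_mul (h2 y) key (by positivity) hM
          _ = _ := by ring
      rw [div_le_iff₀ hden,
        show M * (1+1/ε)^(d+1) * ((1+‖y‖)^(d+1))⁻¹ * ‖y‖^(d+1)
          = ((M * (1+1/ε)^(d+1)) * ‖y‖^(d+1)) / (1+‖y‖)^(d+1) by ring,
        le_div_iff₀ hpow1]
      exact h3
    refine lt_of_le_of_lt (setLIntegral_mono' measurableSet_ball.compl hpt) ?_
    have hfin : ∫⁻ y : EuclideanSpace ℝ (Fin d),
        ENNReal.ofReal ((1 + ‖y‖) ^ (-((d:ℝ)+1))) < ⊤ := by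
      apply finite_integral_one_add_norm
      simp only [finrank_euclideanSpace, Fintype.card_fin]
      exact_mod_cast lt_add_one (d:ℝ)
    calc ∫⁻ y in (Metric.ball (0:EuclideanSpace ℝ (Fin d)) ε)ᶜ,
          ENNReal.ofReal (C * (1 + ‖y‖) ^ (-((d:ℝ)+1)))
        ≤ ∫⁻ y : EuclideanSpace ℝ (Fin d),
            ENNReal.ofReal (C * (1 + ‖y‖) ^ (-((d:ℝ)+1))) ∂volume :=
          setLIntegral_le_lintegral _ _
      _ = ENNReal.ofReal C * ∫⁻ y : EuclideanSpace ℝ (Fin d),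
            ENNReal.ofReal ((1 + ‖y‖) ^ (-((d:ℝ)+1))) ∂volume := by
          simp_rw [ENNReal.ofReal_mul hCpos]
          exact lintegral_const_mul' _ _ ENNReal.ofReal_ne_top
      _ < ⊤ := ENNReal.mul_lt_top ENNReal.ofReal_lt_top hfin

lemma second_diff_bound {d : ℕ} {u : EuclideanSpace ℝ (Fin d) → ℝ}
    (hu : ContDiff ℝ (⊤ : ℕ∞) u) {C2 : ℝ}
    (hb2 : ∀ z, ‖iteratedFDeriv ℝ 2 u z‖ ≤ C2) (x y : EuclideanSpace ℝ (Fin d)) :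
    |2 * u x - u (x + y) - u (x - y)| ≤ C2 * ‖y‖ ^ 2 := by
  have hC2 : 0 ≤ C2 := le_trans (norm_nonneg _) (hb2 x)
  have hud : Differentiable ℝ u := hu.differentiable (by simp)
  set v := fderiv ℝ u with hv
  have hvdiff : Differentiable ℝ v := (hu.fderiv_right (m := 1) (WithTop.coe_le_coe.mpr le_top)).differentiable one_ne_zero
  have hvd : ∀ z, ‖fderiv ℝ v z‖ ≤ C2 := by
    intro z
    apply ContinuousLinearMap.opNorm_le_bound _ hC2
    intro a
    apply ContinuousLinearMap.opNorm_le_bound _ (by positivity)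
    intro b
    have : fderiv ℝ v z a b = iteratedFDeriv ℝ 2 u z ![a, b] := by
      rw [iteratedFDeriv_two_apply]
      simp [hv]
    rw [this]
    calc ‖iteratedFDeriv ℝ 2 u z ![a, b]‖
        ≤ ‖iteratedFDeriv ℝ 2 u z‖ * ∏ i : Fin 2, ‖![a, b] i‖ :=
          (iteratedFDeriv ℝ 2 u z).le_opNorm _
      _ = ‖iteratedFDeriv ℝ 2 u z‖ * (‖a‖ * ‖b‖) := by
          rw [Fin.prod_univ_two]; simp
      _ ≤ C2 * ‖a‖ * ‖b‖ := by
          rw [← mul_assoc]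
          gcongr
          exact hb2 z
  have hlip : ∀ a b, ‖v a - v b‖ ≤ C2 * ‖a - b‖ := by
    intro a b
    exact Convex.norm_image_sub_le_of_norm_fderiv_le
      (fun z _ => hvdiff z) (fun z _ => hvd z) convex_univ (Set.mem_univ b) (Set.mem_univ a)
  set ψ : ℝ → ℝ := fun t => u (x + t • y) - u (x - y + t • y) with hψ
  have hψd : ∀ t : ℝ, HasDerivAt ψ (v (x + t • y) y - v (x - y + t • y) y) t := by
    intro t
    have hline : ∀ c : EuclideanSpace ℝ (Fin d),
        HasDerivAt (fun t : ℝ => c + t • y) y t := by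
      intro c
      have h1 : HasDerivAt (fun t : ℝ => t • y) ((1:ℝ) • y) t :=
        (hasDerivAt_id t).smul_const y
      simpa using h1.const_add c
    exact ((hud _).hasFDerivAt.comp_hasDerivAt t (hline x)).sub
      ((hud _).hasFDerivAt.comp_hasDerivAt t (hline (x - y)))
  have hbound : ∀ t ∈ Set.Ico (0:ℝ) 1,
      ‖v (x + t • y) y - v (x - y + t • y) y‖ ≤ C2 * ‖y‖ ^ 2 := by
    intro t _
    have : v (x + t • y) y - v (x - y + t • y) y
        = (v (x + t • y) - v (x - y + t • y)) y := by
      simp [ContinuousLinearMap.sub_apply]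
    rw [this]
    calc ‖(v (x + t • y) - v (x - y + t • y)) y‖
        ≤ ‖v (x + t • y) - v (x - y + t • y)‖ * ‖y‖ :=
          ContinuousLinearMap.le_opNorm _ _
      _ ≤ (C2 * ‖(x + t • y) - (x - y + t • y)‖) * ‖y‖ := by
          gcongr; exact hlip _ _
      _ = C2 * ‖y‖ ^ 2 := by
          have : (x + t • y) - (x - y + t • y) = y := by abel
          rw [this]; ring
  have := norm_image_sub_le_of_norm_deriv_le_segment_01'
    (f := ψ) (f' := fun t => v (x + t • y) y - v (x - y + t • y) y)
    (fun t _ => (hψd t).hasDerivWithinAt) hbound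
  have heq : ψ 1 - ψ 0 = -(2 * u x - u (x + y) - u (x - y)) := by
    simp only [hψ, one_smul, zero_smul, add_zero]
    have e1 : x - y + y = x := by abel
    rw [e1]; ring
  rw [heq, Real.norm_eq_abs, abs_neg] at this
  exact this

end Aux

/-- Kato's inequality for `Λ = (-Δ)^{1/2}`: for smooth bounded `u` with bounded second
derivatives, `sgn(u(x))·Λu(x) ≥ Λ|u|(x)` at every point where `u(x) ≠ 0`. -/
theorem stmt18 {d : ℕ} (hd : 0 < d) (u : EuclideanSpace ℝ (Fin d) → ℝ)
    (hu : ContDiff ℝ (⊤ : ℕ∞) u)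
    (hb : ∃ C, ∀ x, |u x| ≤ C)
    (hb2 : ∃ C, ∀ x, ‖iteratedFDeriv ℝ 2 u x‖ ≤ C)
    (x : EuclideanSpace ℝ (Fin d)) (hx : u x ≠ 0) :
    LamSing (fun y => |u y|) x ≤ Real.sign (u x) * LamSing u x := by
  obtain ⟨C0, hC0⟩ := hb
  obtain ⟨C2, hC2⟩ := hb2
  have hC2n : 0 ≤ C2 := le_trans (norm_nonneg _) (hC2 x)
  set s := Real.sign (u x) with hs_def
  have hs : s = 1 ∨ s = -1 := by
    rcases lt_trichotomy (u x) 0 with h | h | h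
    · exact Or.inr (Real.sign_of_neg h)
    · exact absurd h hx
    · exact Or.inl (Real.sign_of_pos h)
  have hsu : s * u x = |u x| := by
    rcases lt_trichotomy (u x) 0 with h | h | h
    · rw [hs_def, Real.sign_of_neg h, abs_of_neg h]; ring
    · exact absurd h hx
    · rw [hs_def, Real.sign_of_pos h, abs_of_pos h]; ring
  have habs_s : ∀ t : ℝ, s * t ≤ |t| := by
    intro t
    rcases hs with h | h <;> rw [h] <;> simp [le_abs_self, neg_le_abs, neg_le, neg_mul, one_mul]
  have hpos : 0 < s * u x := by rw [hsu]; exact abs_pos.2 hx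
  have hc : Continuous fun z => s * u z := continuous_const.mul hu.continuous
  have ev : ∀ᶠ z in nhds x, 0 < s * u z :=
    (hc.continuousAt).eventually_const_lt hpos
  obtain ⟨ε, hε, hball⟩ := Metric.eventually_nhds_iff.mp ev
  have habs : ∀ z : EuclideanSpace ℝ (Fin d), dist z x < ε → |u z| = s * u z := by
    intro z hz
    have h := hball hz
    rcases hs with h1 | h1
    · rw [h1, one_mul] at h ⊢; exact abs_of_pos h
    · rw [h1] at h ⊢
      have : u z < 0 := by linarith
      rw [abs_of_neg this]; ring
  set F : EuclideanSpace ℝ (Fin d) → ℝ := fun y => 2 * u x - u (x + y) - u (x - y) with hF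
  set G : EuclideanSpace ℝ (Fin d) → ℝ :=
    fun y => 2 * |u x| - |u (x + y)| - |u (x - y)| with hG
  have hcont1 : Continuous fun y : EuclideanSpace ℝ (Fin d) => u (x + y) :=
    hu.continuous.comp (continuous_const.add continuous_id)
  have hcont2 : Continuous fun y : EuclideanSpace ℝ (Fin d) => u (x - y) :=
    hu.continuous.comp (continuous_const.sub continuous_id)
  have hFc : Continuous F := (continuous_const.sub hcont1).sub hcont2
  have hGc : Continuous G := (continuous_const.sub hcont1.abs).sub hcont2.abs
  have hF1 : ∀ y, |F y| ≤ C2 * ‖y‖ ^ 2 := fun y => second_diff_bound hu hC2 x y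
  have hF2 : ∀ y, |F y| ≤ 4 * C0 := by
    intro y
    have h1 := abs_le.1 (hC0 x)
    have h2 := abs_le.1 (hC0 (x + y))
    have h3 := abs_le.1 (hC0 (x - y))
    rw [abs_le]; constructor <;> simp only [hF] <;> [linarith; linarith]
  have hdist1 : ∀ y : EuclideanSpace ℝ (Fin d), dist (x + y) x = ‖y‖ := by
    intro y; rw [dist_eq_norm]; simp
  have hdist2 : ∀ y : EuclideanSpace ℝ (Fin d), dist (x - y) x = ‖y‖ := by
    intro y; rw [dist_eq_norm]; simp
  have hGs : ∀ y, ‖y‖ < ε → G y = s * F y := by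
    intro y hy
    have h1 : |u (x + y)| = s * u (x + y) := habs _ (by rw [hdist1]; exact hy)
    have h2 : |u (x - y)| = s * u (x - y) := habs _ (by rw [hdist2]; exact hy)
    simp only [hG, hF, h1, h2, ← hsu]; ring
  have hG1 : ∀ y, ‖y‖ < ε → |G y| ≤ C2 * ‖y‖ ^ 2 := by
    intro y hy
    rw [hGs y hy, abs_mul]
    have : |s| = 1 := by rcases hs with h | h <;> simp [h]
    rw [this, one_mul]
    exact hF1 y
  have hG2 : ∀ y, |G y| ≤ 4 * C0 := by
    intro y
    have h1 := abs_le.1 (hC0 x)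
    have h2 := abs_le.1 (hC0 (x + y))
    have h3 := abs_le.1 (hC0 (x - y))
    have a1 : 0 ≤ |u (x + y)| := abs_nonneg _
    have a2 : 0 ≤ |u (x - y)| := abs_nonneg _
    have a0 : |u x| ≤ C0 := hC0 x
    have b1 : |u (x + y)| ≤ C0 := hC0 (x + y)
    have b2 : |u (x - y)| ≤ C0 := hC0 (x - y)
    have a0' : 0 ≤ |u x| := abs_nonneg _
    rw [abs_le]; constructor <;> simp only [hG] <;> [linarith; linarith]
  have hintF : Integrable (fun y => F y / ‖y‖ ^ (d + 1)) :=
    integrable_kernel hd F hFc.measurable hε hC2n (fun y _ => hF1 y) hF2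
  have hintG : Integrable (fun y => G y / ‖y‖ ^ (d + 1)) :=
    integrable_kernel hd G hGc.measurable hε hC2n hG1 hG2
  have hpt : ∀ y, G y / ‖y‖ ^ (d + 1) ≤ s * (F y / ‖y‖ ^ (d + 1)) := by
    intro y
    have hnum : G y ≤ s * F y := by
      have expand : s * F y = 2 * (s * u x) - s * u (x + y) - s * u (x - y) := by
        simp only [hF]; ring
      rw [expand, hsu]
      have e1 := habs_s (u (x + y))
      have e2 := habs_s (u (x - y))
      simp only [hG]
      linarith
    rw [mul_div_assoc']
    rw [div_eq_mul_inv, div_eq_mul_inv]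
    exact mul_le_mul_of_nonneg_right hnum (by positivity)
  calc LamSing (fun y => |u y|) x = ∫ y, G y / ‖y‖ ^ (d + 1) := by
        simp only [LamSing, hG]
    _ ≤ ∫ y, s * (F y / ‖y‖ ^ (d + 1)) := integral_mono hintG (hintF.const_mul s) hpt
    _ = s * ∫ y, F y / ‖y‖ ^ (d + 1) := integral_const_mul _ _
    _ = s * LamSing u x := by simp only [LamSing, hF]
end
end
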